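/- arXiv:1312.6263 — 5 statements merged into one kernel-verified Lean document; each statement's English description precedes it below -/
import Mathlib

section
/- Let L be a bounded distributive lattice with a Galois connection (f, g), let X(L) be the set of prime filters of L with the canonical relation R, and let h(x) = {F ∈ X(L) | x ∈ F}. Then for all x ∈ L, h(g(x)) = h(x)^Down, where the lower approximation is computed in X(L) with respect to R. -/
/-- A prime filter of a lattice: a nonempty, proper, upward-closed subset closed under
binary meets, such that `a ⊔ b ∈ F` implies `a ∈ F` or `b ∈ F`. -/
def IsPrimeLatFilter {L : Type*} [Lattice L] (F : Set L) : Prop :=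
  F.Nonempty ∧ (∀ a b : L, a ∈ F → a ≤ b → b ∈ F) ∧
    (∀ a b : L, a ∈ F → b ∈ F → a ⊓ b ∈ F) ∧ F ≠ Set.univ ∧
    (∀ a b : L, a ⊔ b ∈ F → a ∈ F ∨ b ∈ F)

/-- For a bounded distributive lattice `L` with a Galois connection `(f, g)`,
the map `h x = {F ∈ X(L) | x ∈ F}` into the prime filter frame satisfies
`h (g x) = (h x)^Down`, where the lower approximation is taken with respect to the
canonical relation `R F G ↔ ∀ a, a ∈ G → f a ∈ F`. -/
theorem h_g_eq_lower {L : Type*} [DistribLattice L] [BoundedOrder L]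
    (f g : L → L) (hgc : ∀ p q : L, f p ≤ q ↔ p ≤ g q) :
    ∀ x : L,
      {F : {F : Set L // IsPrimeLatFilter F} | g x ∈ F.val} =
        {F : {F : Set L // IsPrimeLatFilter F} |
          ∀ G : {F : Set L // IsPrimeLatFilter F},
            (∀ a : L, a ∈ F.val → f a ∈ G.val) → x ∈ G.val} := by
  intro x
  have fmono : Monotone f := fun a b hab => (hgc a (f b)).mpr (hab.trans ((hgc b (f b)).mp le_rfl))
  ext F
  obtain ⟨Fne, Fup, Finf, Fproper, Fprime⟩ := F.2
  simp only [Set.mem_setOf_eq]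
  constructor
  · intro hgx G hRG
    have hx : f (g x) ∈ G.val := hRG _ hgx
    exact G.2.2.1 _ _ hx ((hgc (g x) x).mpr le_rfl)
  · intro hall
    by_contra hgx
    -- the filter generated by f '' F
    set Fs : Set L := {b | ∃ a ∈ F.val, f a ≤ b} with hFs
    have hFsFilt : Order.IsPFilter Fs := by
      refine Order.IsPFilter.of_def ?_ ?_ ?_
      · obtain ⟨a, ha⟩ := Fne
        exact ⟨f a, a, ha, le_rfl⟩
      · rintro b ⟨a, ha, hab⟩ b' ⟨a', ha', hab'⟩
        exact ⟨f (a ⊓ a'), ⟨a ⊓ a', Finf _ _ ha ha', le_rfl⟩,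
          le_trans (fmono inf_le_left) hab, le_trans (fmono inf_le_right) hab'⟩
      · rintro b b' hbb' ⟨a, ha, hab⟩
        exact ⟨a, ha, hab.trans hbb'⟩
    -- disjoint from the principal ideal on x
    have hdisj : Disjoint ((hFsFilt.toPFilter : Order.PFilter L) : Set L)
        ((Order.Ideal.principal x : Order.Ideal L) : Set L) := by
      rw [Set.disjoint_left]
      rintro b ⟨a, ha, hab⟩ hb
      have hbx : b ≤ x := Order.Ideal.mem_principal.mp hb
      exact hgx (Fup _ _ ha ((hgc a x).mp (hab.trans hbx)))
    obtain ⟨J, Jprime, hIJ, hJdisj⟩ :=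
      DistribLattice.prime_ideal_of_disjoint_filter_ideal hdisj
    -- G = complement of J
    have hGpf : IsPrimeLatFilter ((J : Set L)ᶜ) := by
      have htop : (⊤ : L) ∉ (J : Set L) := by
        have : (⊤ : L) ∈ Fs := by
          obtain ⟨a, ha⟩ := Fne
          exact ⟨a, ha, le_top⟩
        exact Set.disjoint_left.mp hJdisj this
      refine ⟨⟨⊤, htop⟩, ?_, ?_, ?_, ?_⟩
      · intro a b ha hab hb
        exact ha (J.lower hab hb)
      · intro a b ha hb hab
        rcases Jprime.mem_or_mem hab with h | h
        · exact ha h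
        · exact hb h
      · intro h
        have : (⊥ : L) ∈ (J : Set L)ᶜ := h ▸ Set.mem_univ _
        exact this J.bot_mem
      · intro a b hab
        by_contra h
        push_neg at h
        simp only [Set.mem_compl_iff, not_not] at h
        exact hab (Order.Ideal.sup_mem h.1 h.2)
    have hxJ : x ∈ (J : Set L) := hIJ (Order.Ideal.mem_principal.mpr le_rfl)
    refine hall ⟨(J : Set L)ᶜ, hGpf⟩ (fun a ha =>
      Set.disjoint_left.mp hJdisj (⟨a, ha, le_rfl⟩ : f a ∈ Fs)) hxJ
end

section
/- Let L be a bounded distributive lattice with a Galois connection (f, g), let X(L) be the set of prime filters of L with the canonical relation R, and let h(x) = {F ∈ X(L) | x ∈ F}. Then for all x ∈ L, h(f(x)) = h(x)^UP, where the upper approximation is computed in X(L) with respect to R. -/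
/-- Prime filter separation lemma: if `I` is an ideal (nonempty, downward closed, join
closed) and `x ∉ I`, then there is a prime filter containing `x` disjoint from `I`. -/
theorem exists_prime_filter {L : Type*} [DistribLattice L]
    (I : Set L) (hIne : I.Nonempty)
    (hIdown : ∀ a b : L, b ∈ I → a ≤ b → a ∈ I)
    (hIjoin : ∀ a b : L, a ∈ I → b ∈ I → a ⊔ b ∈ I)
    (x : L) (hx : x ∉ I) :
    ∃ G : Set L, IsPrimeLatFilter G ∧ x ∈ G ∧ ∀ a ∈ G, a ∉ I := by
  -- the collection of filters containing x and disjoint from I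
  set S : Set (Set L) := {F | x ∈ F ∧ (∀ a b : L, a ∈ F → a ≤ b → b ∈ F) ∧
      (∀ a b : L, a ∈ F → b ∈ F → a ⊓ b ∈ F) ∧ ∀ a ∈ F, a ∉ I} with hS
  have hx0 : Set.Ici x ∈ S := by
    refine ⟨le_refl x, fun a b ha hab => le_trans ha hab,
      fun a b ha hb => le_inf ha hb, fun a ha haI => hx (hIdown _ _ haI ha)⟩
  obtain ⟨G, -, hGS, hGmax⟩ := zorn_subset_nonempty S (fun c hcS hc hcne => by
    obtain ⟨F0, hF0⟩ := hcne
    refine ⟨⋃₀ c, ⟨⟨F0, hF0, (hcS hF0).1⟩, ?_, ?_, ?_⟩, fun s hs => Set.subset_sUnion_of_mem hs⟩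
    · rintro a b ⟨F, hF, haF⟩ hab
      exact ⟨F, hF, (hcS hF).2.1 a b haF hab⟩
    · rintro a b ⟨F, hF, haF⟩ ⟨F', hF', hbF'⟩
      rcases hc.total hF hF' with h | h
      · exact ⟨F', hF', (hcS hF').2.2.1 a b (h haF) hbF'⟩
      · exact ⟨F, hF, (hcS hF).2.2.1 a b haF (h hbF')⟩
    · rintro a ⟨F, hF, haF⟩
      exact (hcS hF).2.2.2 a haF) (Set.Ici x) hx0
  obtain ⟨hxG, hGup, hGmeet, hGI⟩ := hGS
  -- key: if a ∉ G then some c ∈ G has c ⊓ a ∈ I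
  have key : ∀ a : L, a ∉ G → ∃ c ∈ G, c ⊓ a ∈ I := by
    intro a haG
    by_contra h
    push_neg at h
    set G' : Set L := {y | ∃ c ∈ G, c ⊓ a ≤ y} with hG'
    have hGsub : G ⊆ G' := fun y hy => ⟨y, hy, inf_le_left⟩
    have hG'S : G' ∈ S := by
      refine ⟨hGsub hxG, ?_, ?_, ?_⟩
      · rintro p q ⟨c, hc, hcp⟩ hpq; exact ⟨c, hc, le_trans hcp hpq⟩
      · rintro p q ⟨c, hc, hcp⟩ ⟨d, hd, hdq⟩
        refine ⟨c ⊓ d, hGmeet _ _ hc hd, le_inf ?_ ?_⟩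
        · exact le_trans (inf_le_inf_right a inf_le_left) hcp
        · exact le_trans (inf_le_inf_right a inf_le_right) hdq
      · rintro y ⟨c, hc, hcy⟩ hyI
        exact h c hc (hIdown _ _ hyI hcy)
    exact haG (hGmax hG'S hGsub ⟨x, hxG, inf_le_right⟩)
  refine ⟨G, ⟨⟨x, hxG⟩, hGup, hGmeet, ?_, ?_⟩, hxG, hGI⟩
  · intro h
    obtain ⟨i, hi⟩ := hIne
    exact hGI i (h ▸ Set.mem_univ i) hi
  · intro a b hab
    by_contra hcon
    push_neg at hcon
    obtain ⟨c, hc, hcI⟩ := key a hcon.1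
    obtain ⟨d, hd, hdI⟩ := key b hcon.2
    have h1 : c ⊓ d ⊓ (a ⊔ b) ∈ G := hGmeet _ _ (hGmeet _ _ hc hd) hab
    have h2 : c ⊓ d ⊓ (a ⊔ b) ∈ I := by
      have : c ⊓ d ⊓ (a ⊔ b) ≤ (c ⊓ a) ⊔ (d ⊓ b) := by
        rw [inf_sup_left]
        exact sup_le_sup (inf_le_inf inf_le_left le_rfl)
          (inf_le_inf inf_le_right le_rfl)
      exact hIdown _ _ (hIjoin _ _ hcI hdI) this
    exact hGI _ h1 h2

/-- For a bounded distributive lattice `L` with a Galois connection `(f, g)`,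
the map `h x = {F ∈ X(L) | x ∈ F}` into the prime filter frame satisfies
`h (f x) = (h x)^UP`, where the upper approximation is taken with respect to the
canonical relation `R F G ↔ ∀ a, a ∈ G → f a ∈ F`. -/
theorem h_f_eq_upper {L : Type*} [DistribLattice L] [BoundedOrder L]
    (f g : L → L) (hgc : ∀ p q : L, f p ≤ q ↔ p ≤ g q) :
    ∀ x : L,
      {F : {F : Set L // IsPrimeLatFilter F} | f x ∈ F.val} =
        {F : {F : Set L // IsPrimeLatFilter F} |
          ∃ G : {F : Set L // IsPrimeLatFilter F},
            (∀ a : L, a ∈ G.val → f a ∈ F.val) ∧ x ∈ G.val} := by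
  intro x
  have fmono : Monotone f := fun a b hab => (hgc a (f b)).2 (le_trans hab ((hgc b (f b)).1 le_rfl))
  have fsup : ∀ a b : L, f (a ⊔ b) = f a ⊔ f b := by
    intro a b
    refine le_antisymm ?_ (sup_le (fmono le_sup_left) (fmono le_sup_right))
    rw [hgc]
    exact sup_le ((hgc a _).1 le_sup_left) ((hgc b _).1 le_sup_right)
  have fbot : f ⊥ = ⊥ := le_antisymm ((hgc ⊥ ⊥).2 bot_le) bot_le
  ext F
  obtain ⟨Fne, Fup, Fmeet, Fproper, Fprime⟩ := F.2
  simp only [Set.mem_setOf_eq]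
  constructor
  · intro hfx
    have hbotF : (⊥ : L) ∉ F.val := by
      intro h
      exact Fproper (Set.eq_univ_of_forall fun a => Fup ⊥ a h bot_le)
    set I : Set L := {a | f a ∉ F.val} with hI
    obtain ⟨G, hGpf, hxG, hGI⟩ := exists_prime_filter I ⟨⊥, by simp [hI, fbot, hbotF]⟩
      (fun a b hb hab h => hb (Fup _ _ h (fmono hab)))
      (fun a b ha hb h => by
        rw [fsup] at h
        rcases Fprime _ _ h with h' | h'
        exacts [ha h', hb h']) x (by simpa [hI] using hfx)
    exact ⟨⟨G, hGpf⟩, fun a ha => by_contra fun h => hGI a ha h, hxG⟩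
  · rintro ⟨G, hGF, hxG⟩
    exact hGF x hxG
end

section
/- Let L be a Heyting algebra, let X(L) be the set of prime filters of L ordered by inclusion, and let h(x) = {F ∈ X(L) | x ∈ F}. Then for all a, b ∈ L, h(a → b) = h(a) → h(b), where on the right-hand side A → B = {F ∈ X(L) | ∀ G ⊇ F, G ∈ A implies G ∈ B} is the relative pseudocomplement in the lattice of ⊆-upper sets of X(L). -/
/-- A (not necessarily prime) filter. -/
def IsLatFilter {L : Type*} [Lattice L] (F : Set L) : Prop :=
  F.Nonempty ∧ (∀ a b : L, a ∈ F → a ≤ b → b ∈ F) ∧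
    (∀ a b : L, a ∈ F → b ∈ F → a ⊓ b ∈ F)

/-- Prime filter extension: every filter avoiding `b` extends to a prime filter
avoiding `b`, in a distributive lattice. -/
lemma exists_prime_extension {L : Type*} [DistribLattice L] {F₀ : Set L} {b : L}
    (hF : IsLatFilter F₀) (hb : b ∉ F₀) :
    ∃ G : Set L, IsPrimeLatFilter G ∧ F₀ ⊆ G ∧ b ∉ G := by
  obtain ⟨hne, hup, hmeet⟩ := hF
  set S : Set (Set L) := {G | IsLatFilter G ∧ b ∉ G} with hS
  have hzorn : ∀ c ⊆ S, IsChain (· ⊆ ·) c → c.Nonempty →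
      ∃ ub ∈ S, ∀ s ∈ c, s ⊆ ub := by
    intro c hcS hchain hcne
    refine ⟨⋃₀ c, ⟨⟨?_, ?_, ?_⟩, ?_⟩, fun s hs => Set.subset_sUnion_of_mem hs⟩
    · obtain ⟨s, hs⟩ := hcne
      obtain ⟨⟨⟨g, hg⟩, _, _⟩, _⟩ := hcS hs
      exact ⟨g, s, hs, hg⟩
    · rintro u v ⟨s, hs, hu⟩ huv
      exact ⟨s, hs, (hcS hs).1.2.1 _ _ hu huv⟩
    · rintro u v ⟨s, hs, hu⟩ ⟨t, ht, hv⟩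
      rcases hchain.total hs ht with h | h
      · exact ⟨t, ht, (hcS ht).1.2.2 _ _ (h hu) hv⟩
      · exact ⟨s, hs, (hcS hs).1.2.2 _ _ hu (h hv)⟩
    · rintro ⟨s, hs, hbs⟩
      exact (hcS hs).2 hbs
  obtain ⟨m, hFm, hmS, hmax⟩ := zorn_subset_nonempty S hzorn F₀ ⟨⟨hne, hup, hmeet⟩, hb⟩
  · obtain ⟨⟨mne, mup, mmeet⟩, mb⟩ := hmS
    refine ⟨m, ⟨mne, mup, mmeet, ?_, ?_⟩, hFm, mb⟩
    · intro h; exact mb (h ▸ Set.mem_univ b)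
    · intro x y hxy
      by_contra hcon
      push_neg at hcon
      obtain ⟨hx, hy⟩ := hcon
      -- filter generated by m ∪ {x}
      have hgen : ∀ z : L, z ∉ m → ∃ g ∈ m, g ⊓ z ≤ b := by
        intro z hz
        by_contra hc
        push_neg at hc
        have hmem : ({w | ∃ g ∈ m, g ⊓ z ≤ w} : Set L) ∈ S := by
          refine ⟨⟨?_, ?_, ?_⟩, ?_⟩
          · obtain ⟨g, hg⟩ := mne
            exact ⟨z, g, hg, inf_le_right⟩
          · rintro u v ⟨g, hg, hle⟩ huv
            exact ⟨g, hg, hle.trans huv⟩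
          · rintro u v ⟨g, hg, hle⟩ ⟨g', hg', hle'⟩
            refine ⟨g ⊓ g', mmeet _ _ hg hg', ?_⟩
            refine le_inf ?_ ?_
            · exact le_trans (inf_le_inf_right z inf_le_left) hle
            · exact le_trans (inf_le_inf_right z inf_le_right) hle'
          · rintro ⟨g, hg, hle⟩
            exact hc g hg hle
        have hsub : m ⊆ {w | ∃ g ∈ m, g ⊓ z ≤ w} := fun g hg => ⟨g, hg, inf_le_left⟩
        have hle : ({w | ∃ g ∈ m, g ⊓ z ≤ w} : Set L) ⊆ m := hmax hmem hsub
        obtain ⟨g, hg⟩ := mne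
        exact hz (hle ⟨g, hg, inf_le_right⟩)
      obtain ⟨g₁, hg₁, hle₁⟩ := hgen x hx
      obtain ⟨g₂, hg₂, hle₂⟩ := hgen y hy
      have key : (g₁ ⊓ g₂) ⊓ (x ⊔ y) ≤ b := by
        rw [inf_sup_left]
        refine sup_le ?_ ?_
        · exact le_trans (inf_le_inf_right x inf_le_left) hle₁
        · exact le_trans (inf_le_inf_right y inf_le_right) hle₂
      exact mb (mup _ _ (mmeet _ _ (mmeet _ _ hg₁ hg₂) hxy) key)

/-- For a Heyting algebra `L`, the map `h x = {F ∈ X(L) | x ∈ F}` into the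
prime filter frame satisfies `h (a ⇨ b) = h a → h b`, where on the right-hand side
`A → B = {F | ∀ G ⊇ F, G ∈ A → G ∈ B}` is the relative pseudocomplement in the lattice
of `⊆`-upper sets of `X(L)`. -/
theorem h_himp {L : Type*} [HeytingAlgebra L] :
    ∀ a b : L,
      {F : {F : Set L // IsPrimeLatFilter F} | a ⇨ b ∈ F.val} =
        {F : {F : Set L // IsPrimeLatFilter F} |
          ∀ G : {F : Set L // IsPrimeLatFilter F},
            F.val ⊆ G.val → a ∈ G.val → b ∈ G.val} := by
  intro a b
  ext F
  obtain ⟨Fne, Fup, Fmeet, Fprop, Fprime⟩ := F.2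
  simp only [Set.mem_setOf_eq]
  constructor
  · intro hab G hFG haG
    obtain ⟨_, Gup, Gmeet, _, _⟩ := G.2
    exact Gup _ _ (Gmeet _ _ (hFG hab) haG) (by simp [himp_inf_self])
  · intro h
    by_contra hab
    set F₀ : Set L := {x | ∃ f ∈ F.val, f ⊓ a ≤ x} with hF₀
    have hbF₀ : b ∉ F₀ := by
      rintro ⟨f, hf, hle⟩
      exact hab (Fup _ _ hf (le_himp_iff.2 hle))
    have hfil : IsLatFilter F₀ := by
      refine ⟨?_, ?_, ?_⟩
      · obtain ⟨f, hf⟩ := Fne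
        exact ⟨a, f, hf, inf_le_right⟩
      · rintro u v ⟨f, hf, hle⟩ huv
        exact ⟨f, hf, hle.trans huv⟩
      · rintro u v ⟨f, hf, hle⟩ ⟨f', hf', hle'⟩
        exact ⟨f ⊓ f', Fmeet _ _ hf hf',
          le_inf (le_trans (inf_le_inf_right a inf_le_left) hle)
            (le_trans (inf_le_inf_right a inf_le_right) hle')⟩
    obtain ⟨G, hGp, hFG, hbG⟩ := exists_prime_extension hfil hbF₀
    have hsub : F.val ⊆ G := fun f hf => hFG ⟨f, hf, inf_le_left⟩
    have haG : a ∈ G := by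
      obtain ⟨f, hf⟩ := Fne
      exact hFG ⟨f, hf, inf_le_right⟩
    exact hbG (h ⟨G, hGp⟩ hsub haG)
end

section
/- Let L be a Heyting–Brouwer algebra (a bi-Heyting algebra), let X(L) be the set of prime filters of L ordered by inclusion, and let h(x) = {F ∈ X(L) | x ∈ F}. Then for all a, b ∈ L, h(a ← b) = h(a) ← h(b), where on the right-hand side A ← B = {F ∈ X(L) | ∃ G ⊆ F, G ∉ A and G ∈ B} is the co-implication in the lattice of ⊆-upper sets of X(L). -/
open Order in
/-- The key separation lemma: if `F` is a prime filter and `b \ a ∈ F`, then there is a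
prime filter `G ⊆ F` with `a ∉ G` and `b ∈ G`. -/
lemma exists_prime_filter_s11 {L : Type*} [BiheytingAlgebra L] {a b : L} {F : Set L}
    (hF : IsPrimeLatFilter F) (hba : b \ a ∈ F) :
    ∃ G : Set L, IsPrimeLatFilter G ∧ G ⊆ F ∧ a ∉ G ∧ b ∈ G := by
  obtain ⟨hne, hup, hinf, hproper, hprime⟩ := hF
  -- The complement of F is an ideal.
  have hFc : IsIdeal Fᶜ := by
    refine ⟨fun x y hxy hy hx => hy (hup y x hx hxy), ?_, ?_⟩
    · rcases Set.ne_univ_iff_exists_notMem F |>.mp hproper with ⟨x, hx⟩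
      exact ⟨x, hx⟩
    · intro x hx y hy
      refine ⟨x ⊔ y, fun h => ?_, le_sup_left, le_sup_right⟩
      rcases hprime x y h with h' | h' <;> [exact hx h'; exact hy h']
  -- Consider the ideal generated by Fᶜ and a.
  set I : Ideal L := hFc.toIdeal ⊔ Ideal.principal a with hI
  -- The principal filter at b is disjoint from I.
  have hbI : b ∉ I := by
    intro hb
    rw [hI, DistribLattice.mem_ideal_sup_principal] at hb
    obtain ⟨j, hj, hbj⟩ := hb
    have : b \ a ≤ j := by
      rw [sdiff_le_iff]
      exact hbj.trans (by rw [sup_comm])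
    exact hj (hup _ _ hba this)
  have hdisj : Disjoint ((PFilter.principal b : PFilter L) : Set L) (I : Set L) := by
    rw [Set.disjoint_left]
    intro x hx hxI
    exact hbI (I.lower hx hxI)
  obtain ⟨J, hJprime, hIJ, hJdisj⟩ :=
    DistribLattice.prime_ideal_of_disjoint_filter_ideal hdisj
  refine ⟨(J : Set L)ᶜ, ⟨?_, ?_, ?_, ?_, ?_⟩, ?_, ?_, ?_⟩
  · exact ⟨b, Set.disjoint_left.mp hJdisj (PFilter.mem_principal.mpr le_rfl)⟩
  · exact fun x y hx hxy hy => hx (J.lower hxy hy)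
  · intro x y hx hy
    intro hxy
    rcases hJprime.mem_or_mem hxy with h | h <;> [exact hx h; exact hy h]
  · intro h
    have : ⊥ ∈ (J : Set L)ᶜ := h ▸ Set.mem_univ ⊥
    exact this J.bot_mem
  · intro x y hxy
    by_contra h
    push_neg at h
    simp only [Set.mem_compl_iff, not_not] at h
    exact hxy (Ideal.sup_mem h.1 h.2)
  · intro x hx
    by_contra hxF
    exact hx (hIJ (le_sup_left (a := hFc.toIdeal) hxF))
  · intro ha
    exact ha (hIJ (le_sup_right (b := Ideal.principal a) (Ideal.mem_principal.mpr le_rfl)))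
  · exact Set.disjoint_left.mp hJdisj (PFilter.mem_principal.mpr le_rfl)

/-- For a Heyting–Brouwer (bi-Heyting) algebra `L`, the map
`h x = {F ∈ X(L) | x ∈ F}` into the prime filter frame satisfies
`h (a ← b) = h a ← h b`, where the co-implication `a ← b` (the least `x` with
`b ≤ a ⊔ x`) is `b \ a` in Mathlib's notation, and on the right-hand side
`A ← B = {F | ∃ G ⊆ F, G ∉ A ∧ G ∈ B}` is the co-implication in the lattice of
`⊆`-upper sets of `X(L)`. -/
theorem h_coimp {L : Type*} [BiheytingAlgebra L] :
    ∀ a b : L,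
      {F : {F : Set L // IsPrimeLatFilter F} | b \ a ∈ F.val} =
        {F : {F : Set L // IsPrimeLatFilter F} |
          ∃ G : {F : Set L // IsPrimeLatFilter F},
            G.val ⊆ F.val ∧ a ∉ G.val ∧ b ∈ G.val} := by
  intro a b
  ext F
  simp only [Set.mem_setOf_eq]
  constructor
  · intro hba
    obtain ⟨G, hG, hGF, ha, hb⟩ := exists_prime_filter_s11 F.2 hba
    exact ⟨⟨G, hG⟩, hGF, ha, hb⟩
  · rintro ⟨G, hGF, ha, hb⟩
    obtain ⟨-, hup, -, -, hprime⟩ := G.2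
    have : a ⊔ b \ a ∈ G.val := hup b _ hb le_sup_sdiff
    rcases hprime _ _ this with h | h
    · exact absurd h ha
    · exact hGF h
end

section
/- Let L be a finite bounded distributive lattice, let X(L) be the set of prime filters of L, and let h(x) = {F ∈ X(L) | x ∈ F}. Then h is surjective onto the ⊆-upper sets of X(L): for every family A of prime filters such that F ∈ A and F ⊆ G imply G ∈ A, there exists x ∈ L with A = h(x). -/
/-- For a finite bounded distributive lattice `L`, the map
`h x = {F ∈ X(L) | x ∈ F}` is onto the `⊆`-upper sets of the set `X(L)` of prime
filters: every upward-closed family `A` of prime filters is of the form `h x`. -/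
theorem h_surjective_of_finite {L : Type*} [DistribLattice L] [BoundedOrder L] [Fintype L]
    (A : Set {F : Set L // IsPrimeLatFilter F})
    (hA : ∀ F G : {F : Set L // IsPrimeLatFilter F}, F ∈ A → F.val ⊆ G.val → G ∈ A) :
    ∃ x : L, A = {F : {F : Set L // IsPrimeLatFilter F} | x ∈ F.val} := by
  classical
  -- Each prime filter is principal, generated by its minimum element.
  have key : ∀ F : {F : Set L // IsPrimeLatFilter F},
      ∃ m : L, m ∈ F.val ∧ F.val = {y | m ≤ y} := by
    rintro ⟨F, hNe, hUp, hMeet, hProp, hPrime⟩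
    have hfin : F.Finite := Set.toFinite F
    have hsne : hfin.toFinset.Nonempty := by
      simpa [Set.Finite.toFinset] using hNe
    refine ⟨hfin.toFinset.inf' hsne id, ?_, ?_⟩
    · have := Finset.inf'_mem F (fun x hx y hy => hMeet x y hx hy) hfin.toFinset hsne id
        (by intro i hi; simpa using hi)
      simpa using this
    · ext y
      constructor
      · intro hy
        exact Finset.inf'_le id (by simpa using hy)
      · intro hy
        refine hUp _ y ?_ hy
        have := Finset.inf'_mem F (fun x hx y hy => hMeet x y hx hy) hfin.toFinset hsne id
          (by intro i hi; simpa using hi)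
        simpa using this
  choose m hmem hgen using key
  have hAfin : A.Finite := Set.toFinite A
  refine ⟨hAfin.toFinset.sup m, ?_⟩
  ext G
  obtain ⟨gNe, gUp, gMeet, gProp, gPrime⟩ := G.property
  constructor
  · intro hG
    have : m G ≤ hAfin.toFinset.sup m :=
      Finset.le_sup (by simpa using hG)
    exact gUp _ _ (hmem G) this
  · intro hx
    have hbot : (⊥ : L) ∉ G.val := by
      intro hb
      apply gProp
      ext y
      simp only [Set.mem_univ, iff_true]
      exact gUp _ _ hb bot_le
    -- sup over a finset lying in a prime filter: some summand lies in it
    have main : ∀ s : Finset {F : Set L // IsPrimeLatFilter F},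
        s.sup m ∈ G.val → ∃ F ∈ s, m F ∈ G.val := by
      intro s
      induction s using Finset.cons_induction with
      | empty => intro h; exact absurd h (by simpa using hbot)
      | cons a s ha ih =>
        intro h
        rw [Finset.sup_cons] at h
        rcases gPrime _ _ h with h1 | h2
        · exact ⟨a, Finset.mem_cons_self a s, h1⟩
        · obtain ⟨F, hF, hFm⟩ := ih h2
          exact ⟨F, Finset.mem_cons_of_mem hF, hFm⟩
    obtain ⟨F, hFs, hFm⟩ := main _ hx
    have hFA : F ∈ A := by simpa using hFs
    refine hA F G hFA ?_
    rw [hgen F]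
    intro y hy
    exact gUp _ _ hFm hy
end
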